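/- Decoupled form of the first doubling step: let U₀, Q₀ and Y₀ ∈ ℝ^{r×r}, Z₀ ∈ ℝ^{r×r}, S₀, T₀, γ be such that I - Y₀Z₀, I - Z₀Y₀ and L := I - Y₀Z₀ - γ²T₀(I - Z₀Y₀)⁻¹S₀ are invertible. Then the 2×2 block matrix (I - Y₁Z₁) with Y₁ = [[0, Y₀],[Y₀, γT₀]] and Z₁ = [[0, Z₀],[Z₀, γS₀]] is invertible, and its inverse equals [[I, γ(I-Y₀Z₀)⁻¹Y₀S₀],[0, I]] · diag((I-Y₀Z₀)⁻¹, L⁻¹) · [[I, 0],[γT₀(I-Z₀Y₀)⁻¹Z₀, I]]. -/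

import Mathlib

/-!
`1 - Y₁ Z₁` is the block matrix `[[A, -γ Y₀ S₀], [-γ T₀ Z₀, A - γ² T₀ S₀]]` with `A = 1 - Y₀ Z₀`.
By the push-through identity `Z₀ (1 - Y₀ Z₀)⁻¹ = (1 - Z₀ Y₀)⁻¹ Z₀`, equivalently
`1 + Z₀ A⁻¹ Y₀ = (1 - Z₀ Y₀)⁻¹`, the Schur complement of `A` is exactly `L`, so the claimed
factorisation is the block LDU decomposition inverted factor by factor.
-/

open Matrix

namespace Matrix

variable {m n α : Type*} [Fintype m] [Fintype n] [DecidableEq m] [DecidableEq n] [CommRing α]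

theorem inv_fromBlocks_eq_of_isUnit₁₁ {A : Matrix m m α} {B : Matrix m n α} {C : Matrix n m α}
    {D : Matrix n n α} (hA : IsUnit A) (hS : IsUnit (D - C * A⁻¹ * B)) :
    (fromBlocks A B C D)⁻¹ =
      fromBlocks 1 (-(A⁻¹ * B)) 0 1 * fromBlocks A⁻¹ 0 0 (D - C * A⁻¹ * B)⁻¹ *
        fromBlocks 1 0 (-(C * A⁻¹)) 1 := by
  let := hA.invertible
  rw [fromBlocks_eq_of_invertible₁₁, invOf_eq_nonsing_inv, Matrix.mul_inv_rev, Matrix.mul_inv_rev,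
    inv_fromBlocks_zero₂₁_of_isUnit_iff _ _ _ (iff_of_true hA hS),
    inv_fromBlocks_zero₂₁_of_isUnit_iff _ _ _ (iff_of_true isUnit_one isUnit_one),
    inv_fromBlocks_zero₁₂_of_isUnit_iff _ _ _ (iff_of_true isUnit_one isUnit_one)]
  simp [Matrix.mul_assoc]

theorem isUnit_fromBlocks_of_isUnit₁₁ {A : Matrix m m α} {B : Matrix m n α} {C : Matrix n m α}
    {D : Matrix n n α} (hA : IsUnit A) (hS : IsUnit (D - C * A⁻¹ * B)) :
    IsUnit (fromBlocks A B C D) := by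
  let := hA.invertible
  rwa [isUnit_fromBlocks_iff_of_invertible₁₁, invOf_eq_nonsing_inv]

theorem isUnit_one_sub_mul_comm {Y : Matrix m n α} {Z : Matrix n m α} (h : IsUnit (1 - Y * Z)) :
    IsUnit (1 - Z * Y) := by
  rwa [isUnit_iff_isUnit_det, ← det_one_sub_mul_comm, ← isUnit_iff_isUnit_det]

theorem mul_inv_one_sub_mul_comm {Y : Matrix m n α} {Z : Matrix n m α} (h : IsUnit (1 - Y * Z)) :
    Z * (1 - Y * Z)⁻¹ = (1 - Z * Y)⁻¹ * Z := by
  have hZY := (isUnit_iff_isUnit_det _).mp (isUnit_one_sub_mul_comm h)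
  have intertwine : (1 - Z * Y) * Z = Z * (1 - Y * Z) := by
    simp only [Matrix.sub_mul, Matrix.mul_sub, Matrix.one_mul, Matrix.mul_one, Matrix.mul_assoc]
  calc Z * (1 - Y * Z)⁻¹ = (1 - Z * Y)⁻¹ * ((1 - Z * Y) * Z) * (1 - Y * Z)⁻¹ := by
        rw [nonsing_inv_mul_cancel_left _ _ hZY]
    _ = (1 - Z * Y)⁻¹ * Z := by
        rw [intertwine, Matrix.mul_assoc, Matrix.mul_assoc,
          mul_nonsing_inv _ ((isUnit_iff_isUnit_det _).mp h), Matrix.mul_one]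

theorem one_add_mul_inv_one_sub_mul_mul {Y : Matrix m n α} {Z : Matrix n m α}
    (h : IsUnit (1 - Y * Z)) : 1 + Z * (1 - Y * Z)⁻¹ * Y = (1 - Z * Y)⁻¹ := by
  have hZY := (isUnit_iff_isUnit_det _).mp (isUnit_one_sub_mul_comm h)
  calc 1 + Z * (1 - Y * Z)⁻¹ * Y = (1 - Z * Y)⁻¹ * ((1 - Z * Y) + Z * Y) := by
        rw [mul_inv_one_sub_mul_comm h, Matrix.mul_add, nonsing_inv_mul _ hZY, Matrix.mul_assoc]
    _ = (1 - Z * Y)⁻¹ := by rw [sub_add_cancel, Matrix.mul_one]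

theorem one_sub_fromBlocks_mul_fromBlocks (Y Z S T : Matrix m m α) (γ : α) :
    1 - fromBlocks 0 Y Y (γ • T) * fromBlocks 0 Z Z (γ • S) =
      fromBlocks (1 - Y * Z) (-(γ • (Y * S))) (-(γ • (T * Z)))
        (1 - Y * Z - (γ ^ 2) • (T * S)) := by
  rw [fromBlocks_multiply, ← fromBlocks_one, sub_eq_add_neg, fromBlocks_neg, fromBlocks_add]
  congr 1 <;> simp [smul_smul, sq] <;> abel

end Matrix

theorem stmt13_general {r : ℕ} (Y₀ Z₀ S₀ T₀ : Matrix (Fin r) (Fin r) ℝ) (γ : ℝ)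
    (h1 : IsUnit (1 - Y₀ * Z₀))
    (L : Matrix (Fin r) (Fin r) ℝ)
    (hL : L = 1 - Y₀ * Z₀ - (γ ^ 2) • (T₀ * (1 - Z₀ * Y₀)⁻¹ * S₀))
    (hLu : IsUnit L)
    (Y₁ Z₁ : Matrix (Fin r ⊕ Fin r) (Fin r ⊕ Fin r) ℝ)
    (hY₁ : Y₁ = Matrix.fromBlocks 0 Y₀ Y₀ (γ • T₀))
    (hZ₁ : Z₁ = Matrix.fromBlocks 0 Z₀ Z₀ (γ • S₀)) :
    IsUnit (1 - Y₁ * Z₁) ∧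
    (1 - Y₁ * Z₁)⁻¹ =
      Matrix.fromBlocks 1 (γ • ((1 - Y₀ * Z₀)⁻¹ * Y₀ * S₀)) 0 1 *
        Matrix.fromBlocks ((1 - Y₀ * Z₀)⁻¹) 0 0 L⁻¹ *
        Matrix.fromBlocks 1 0 (γ • (T₀ * (1 - Z₀ * Y₀)⁻¹ * Z₀)) 1 := by
  have hschur : 1 - Y₀ * Z₀ - γ ^ 2 • (T₀ * S₀) -
      -(γ • (T₀ * Z₀)) * (1 - Y₀ * Z₀)⁻¹ * -(γ • (Y₀ * S₀)) = L := by
    rw [hL, ← one_add_mul_inv_one_sub_mul_mul h1]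
    simp only [Matrix.neg_mul, Matrix.mul_neg, Matrix.smul_mul, Matrix.mul_smul, Matrix.mul_add,
      Matrix.add_mul, Matrix.mul_one, Matrix.mul_assoc]
    module
  have hS := hschur ▸ hLu
  subst hY₁ hZ₁
  rw [one_sub_fromBlocks_mul_fromBlocks]
  refine ⟨isUnit_fromBlocks_of_isUnit₁₁ h1 hS, ?_⟩
  rw [inv_fromBlocks_eq_of_isUnit₁₁ h1 hS, hschur, Matrix.mul_assoc T₀,
    ← mul_inv_one_sub_mul_comm h1]
  simp only [Matrix.neg_mul, Matrix.mul_neg, neg_neg, Matrix.smul_mul, Matrix.mul_smul,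
    Matrix.mul_assoc]

theorem stmt13 {r : ℕ} (Y₀ Z₀ S₀ T₀ : Matrix (Fin r) (Fin r) ℝ) (γ : ℝ)
    (h1 : IsUnit (1 - Y₀ * Z₀)) (h2 : IsUnit (1 - Z₀ * Y₀))
    (L : Matrix (Fin r) (Fin r) ℝ)
    (hL : L = 1 - Y₀ * Z₀ - (γ ^ 2) • (T₀ * (1 - Z₀ * Y₀)⁻¹ * S₀))
    (hLu : IsUnit L)
    (Y₁ Z₁ : Matrix (Fin r ⊕ Fin r) (Fin r ⊕ Fin r) ℝ)
    (hY₁ : Y₁ = Matrix.fromBlocks 0 Y₀ Y₀ (γ • T₀))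
    (hZ₁ : Z₁ = Matrix.fromBlocks 0 Z₀ Z₀ (γ • S₀)) :
    IsUnit (1 - Y₁ * Z₁) ∧
    (1 - Y₁ * Z₁)⁻¹ =
      Matrix.fromBlocks 1 (γ • ((1 - Y₀ * Z₀)⁻¹ * Y₀ * S₀)) 0 1 *
        Matrix.fromBlocks ((1 - Y₀ * Z₀)⁻¹) 0 0 L⁻¹ *
        Matrix.fromBlocks 1 0 (γ • (T₀ * (1 - Z₀ * Y₀)⁻¹ * Z₀)) 1 :=
  stmt13_general Y₀ Z₀ S₀ T₀ γ h1 L hL hLu Y₁ Z₁ hY₁ hZ₁
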